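/- Two forests f₁, f₂ over Σ satisfy nf_𝓐(f₁) = nf_𝓐(f₂) if and only if f₁ and f₂ are equal modulo the associativity identities a(t₁ ⋯ tₙ) = a(t₁ ⋯ tᵢ₋₁ a(tᵢ ⋯ tⱼ₋₁) tⱼ ⋯ tₙ) for all a ∈ 𝓐. -/
import Mathlib


inductive RTree (σ : Type) : Type
  | node : σ → List (RTree σ) → RTree σ

mutual
/-- `φ_a` on trees, where `a : Option σ` ranges over `Σ ∪ {•}` (`none` is `•`):
`φ_a(b(f)) = φ_a(f)` if `a = b ∈ 𝓐`, and `φ_a(b(f)) = b(φ_b(f))` otherwise. -/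
def phiT {σ : Type} [DecidableEq σ] (A : Set σ) [DecidablePred (· ∈ A)] :
    Option σ → RTree σ → List (RTree σ)
  | a, .node b f =>
      if a = some b ∧ b ∈ A then phiF A a f else [.node b (phiF A (some b) f)]
/-- `φ_a` extended homomorphically to forests. -/
def phiF {σ : Type} [DecidableEq σ] (A : Set σ) [DecidablePred (· ∈ A)] :
    Option σ → List (RTree σ) → List (RTree σ)
  | _, [] => []
  | a, t :: ts => phiT A a t ++ phiF A a ts
end

/-- The associative normal form `nf_𝓐(f) = φ_•(f)`. -/
def nfA {σ : Type} [DecidableEq σ] (A : Set σ) [DecidablePred (· ∈ A)]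
    (f : List (RTree σ)) : List (RTree σ) :=
  phiF A none f

/-- Equality of forests modulo the associativity identities
`a(t₁ ⋯ tₙ) = a(t₁ ⋯ tᵢ₋₁ a(tᵢ ⋯ tⱼ₋₁) tⱼ ⋯ tₙ)` for `a ∈ 𝓐`: the smallest
congruence (with respect to horizontal concatenation and tree construction)
containing all instances of these identities. -/
inductive EqA {σ : Type} (A : Set σ) : List (RTree σ) → List (RTree σ) → Prop
  | assoc {a : σ} {f g h : List (RTree σ)} :
      a ∈ A → EqA A [.node a (f ++ g ++ h)] [.node a (f ++ .node a g :: h)]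
  | refl (f : List (RTree σ)) : EqA A f f
  | symm {f g : List (RTree σ)} : EqA A f g → EqA A g f
  | trans {f g h : List (RTree σ)} : EqA A f g → EqA A g h → EqA A f h
  | congrNode {a : σ} {f g : List (RTree σ)} :
      EqA A f g → EqA A [.node a f] [.node a g]
  | congrConcat {f f' g g' : List (RTree σ)} :
      EqA A f f' → EqA A g g' → EqA A (f ++ g) (f' ++ g')

mutual
def sizeT {σ : Type} : RTree σ → Nat
  | .node _ f => 1 + sizeF f
def sizeF {σ : Type} : List (RTree σ) → Nat
  | [] => 0
  | t :: ts => sizeT t + sizeF ts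
end

theorem sizeF_append {σ : Type} (f g : List (RTree σ)) :
    sizeF (f ++ g) = sizeF f + sizeF g := by
  induction f with
  | nil => simp [sizeF]
  | cons t ts ih => simp [sizeF, ih]; omega

theorem phiF_append {σ : Type} [DecidableEq σ] (A : Set σ) [DecidablePred (· ∈ A)]
    (a : Option σ) (f g : List (RTree σ)) :
    phiF A a (f ++ g) = phiF A a f ++ phiF A a g := by
  induction f with
  | nil => simp [phiF]
  | cons t ts ih => simp [phiF, ih]

theorem phiF_congr {σ : Type} [DecidableEq σ] (A : Set σ) [DecidablePred (· ∈ A)]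
    {f g : List (RTree σ)} (hfg : EqA A f g) :
    ∀ a, phiF A a f = phiF A a g := by
  induction hfg with
  | @assoc a f g h ha =>
      have key : phiF A (some a) (f ++ g ++ h)
          = phiF A (some a) (f ++ RTree.node a g :: h) := by
        have h1 : phiF A (some a) [RTree.node a g] = phiF A (some a) g := by
          simp [phiF, phiT, ha]
        rw [show (RTree.node a g :: h) = [RTree.node a g] ++ h from rfl]
        simp only [phiF_append, List.append_assoc]
        rw [h1]
      intro ctx
      simp only [phiF, phiT, List.append_nil]
      split <;> rename_i hc
      · obtain ⟨rfl, -⟩ := hc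
        exact key
      · rw [key]
  | refl f => intro a; rfl
  | symm _ ih => intro a; exact (ih a).symm
  | trans _ _ ih1 ih2 => intro a; exact (ih1 a).trans (ih2 a)
  | @congrNode a f g _ ih =>
      intro ctx
      simp only [phiF, phiT, List.append_nil]
      split
      · exact ih ctx
      · simp [ih (some a)]
  | congrConcat _ _ ih1 ih2 =>
      intro a
      have h12 := congrArg₂ (· ++ ·) (ih1 a) (ih2 a)
      simpa [phiF_append] using h12

theorem eqA_phiF {σ : Type} [DecidableEq σ] (A : Set σ) [DecidablePred (· ∈ A)] :
    ∀ (n : Nat) (b : σ) (h f : List (RTree σ)), sizeF f ≤ n →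
      EqA A [RTree.node b (h ++ f)] [RTree.node b (h ++ phiF A (some b) f)] := by
  intro n
  induction n with
  | zero =>
      intro b h f hf
      cases f with
      | nil => simp [phiF]; exact EqA.refl _
      | cons t ts => cases t; simp [sizeF, sizeT] at hf
  | succ n ih =>
      intro b h f hf
      cases f with
      | nil => simp [phiF]; exact EqA.refl _
      | cons t ts =>
        obtain ⟨c, g⟩ := t
        by_cases hc : (some b : Option σ) = some c ∧ c ∈ A
        · obtain ⟨hbc, hcA⟩ := hc
          obtain rfl : b = c := by injection hbc
          have hsz : sizeF (g ++ ts) ≤ n := by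
            simp [sizeF_append]; simp [sizeF, sizeT] at hf; omega
          have step1 : EqA A [RTree.node b (h ++ RTree.node b g :: ts)]
              [RTree.node b (h ++ (g ++ ts))] := by
            have := (EqA.assoc (A := A) (a := b) (f := h) (g := g) (h := ts) hcA).symm
            simpa [List.append_assoc] using this
          have step2 := ih b h (g ++ ts) hsz
          have : phiF A (some b) (RTree.node b g :: ts)
              = phiF A (some b) (g ++ ts) := by
            simp [phiF, phiT, hcA, phiF_append]
          rw [this]
          exact step1.trans step2
        · have hg : sizeF g ≤ n := by simp [sizeF, sizeT] at hf; omega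
          have hts : sizeF ts ≤ n := by simp [sizeF, sizeT] at hf; omega
          have headEq : EqA A [RTree.node c g] [RTree.node c (phiF A (some c) g)] := by
            simpa using ih c [] g hg
          have step2 : EqA A [RTree.node b (h ++ RTree.node c g :: ts)]
              [RTree.node b (h ++ RTree.node c (phiF A (some c) g) :: ts)] := by
            have := EqA.congrNode (a := b)
              (EqA.congrConcat (EqA.refl h) (EqA.congrConcat headEq (EqA.refl ts)))
            simpa using this
          have step3 := ih b (h ++ [RTree.node c (phiF A (some c) g)]) ts hts
          have hc' : ¬(b = c ∧ c ∈ A) := fun ⟨h1, h2⟩ => hc ⟨by rw [h1], h2⟩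
          have hphi : phiF A (some b) (RTree.node c g :: ts)
              = RTree.node c (phiF A (some c) g) :: phiF A (some b) ts := by
            simp only [phiF, phiT]
            rw [if_neg (by simpa using hc')]
            rfl
          rw [hphi]
          refine step2.trans ?_
          simpa [List.append_assoc] using step3

theorem eqA_nfA {σ : Type} [DecidableEq σ] (A : Set σ) [DecidablePred (· ∈ A)]
    (f : List (RTree σ)) : EqA A f (nfA A f) := by
  show EqA A f (phiF A none f)
  induction f with
  | nil => exact EqA.refl _
  | cons t ts ih =>
      obtain ⟨b, g⟩ := t
      have hphi : phiF A none (RTree.node b g :: ts)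
          = RTree.node b (phiF A (some b) g) :: phiF A none ts := by
        simp [phiF, phiT]
      rw [hphi]
      have headEq : EqA A [RTree.node b g] [RTree.node b (phiF A (some b) g)] := by
        simpa using eqA_phiF A (sizeF g) b [] g le_rfl
      have := EqA.congrConcat headEq ih
      simpa using this


/-- Two forests have the same associative normal form iff they are equal
modulo the associativity identities for the symbols in `𝓐`. -/
theorem nfA_eq_iff_eqA {σ : Type} [DecidableEq σ] (A : Set σ)
    [DecidablePred (· ∈ A)] (f₁ f₂ : List (RTree σ)) :
    nfA A f₁ = nfA A f₂ ↔ EqA A f₁ f₂ := by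
  constructor
  · intro h
    exact (eqA_nfA A f₁).trans (h ▸ (eqA_nfA A f₂).symm)
  · intro h
    exact phiF_congr A h none
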